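/- arXiv:2605.14981 — 6 statements merged into one kernel-verified Lean document; each statement's English description precedes it below -/
import Mathlib

section
/- For all compact metric measure spaces 𝒳 = (X, d_X, μ) and 𝒴 = (Y, d_Y, ν), every integer n ≥ 2, and every p ≥ 1, the Distance-Matrix Wasserstein statistic is a lower bound for the Gromov–Wasserstein distance: DMW_{n,p}(𝒳, 𝒴) ≤ GW_p(𝒳, 𝒴). -/
open MeasureTheory Filter
open scoped ENNReal NNReal

noncomputable section

/-- The set of couplings of two measures: probability measures on the product
whose marginals are the two given measures. -/
def couplings {X Y : Type*} [MeasurableSpace X] [MeasurableSpace Y]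
    (μ : Measure X) (ν : Measure Y) : Set (Measure (X × Y)) :=
  {π | π.map Prod.fst = μ ∧ π.map Prod.snd = ν}

/-- The `p`-Wasserstein distance associated with a cost/distance function `d` on `Z`:
`W_p(α,β) = (inf_{γ ∈ Π(α,β)} ∫ d(z,z')^p dγ)^{1/p}`. -/
def Wp {Z : Type*} [MeasurableSpace Z] (p : ℝ) (d : Z → Z → ℝ)
    (α β : Measure Z) : ℝ :=
  sInf {c : ℝ | ∃ π ∈ couplings α β, c = ∫ z, d z.1 z.2 ^ p ∂π} ^ (1 / p)

/-- The Gromov–Wasserstein distance between `(X, dX, μ)` and `(Y, dY, ν)`: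
`GW_p = (inf_{π ∈ Π(μ,ν)} ∬ |dX(x,x') - dY(y,y')|^p dπ dπ)^{1/p}`. -/
def GW {X Y : Type*} [MeasurableSpace X] [MeasurableSpace Y]
    (p : ℝ) (dX : X → X → ℝ) (dY : Y → Y → ℝ)
    (μ : Measure X) (ν : Measure Y) : ℝ :=
  sInf {c : ℝ | ∃ π ∈ couplings μ ν,
      c = ∫ w, |dX w.1.1 w.2.1 - dY w.1.2 w.2.2| ^ p ∂(π.prod π)} ^ (1 / p)

/-- The index set of unordered pairs `i < j` of `Fin n`; it has `n.choose 2` elements. -/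
abbrev PairIdx (n : ℕ) := {ij : Fin n × Fin n // ij.1 < ij.2}

/-- The order-`n` distance-matrix map `T_X^{(n)}`. -/
def dmMap {X : Type*} (n : ℕ) (dX : X → X → ℝ) (x : Fin n → X) : PairIdx n → ℝ :=
  fun ij => dX (x ij.1.1) (x ij.1.2)

/-- The order-`n` distance-matrix law `ρ_X^{(n)} = (T_X^{(n)})_# μ^{⊗n}`. -/
def dmLaw {X : Type*} [MeasurableSpace X] (n : ℕ) (dX : X → X → ℝ) (μ : Measure X) :
    Measure (PairIdx n → ℝ) :=
  (Measure.pi fun _ : Fin n => μ).map (dmMap n dX)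

/-- The normalized averaged `ℓ^p` metric `‖a-b‖_{p,avg}` on distance matrices. -/
def avgDist (n : ℕ) (p : ℝ) (a b : PairIdx n → ℝ) : ℝ :=
  ((n.choose 2 : ℝ)⁻¹ * ∑ ij : PairIdx n, |a ij - b ij| ^ p) ^ (1 / p)

/-- The order-`n` Distance-Matrix Wasserstein statistic
`DMW_{n,p}(𝒳,𝒴) = W_p(ρ_X^{(n)}, ρ_Y^{(n)})` for the metric `‖·‖_{p,avg}`. -/
def DMW {X Y : Type*} [MeasurableSpace X] [MeasurableSpace Y]
    (n : ℕ) (p : ℝ) (dX : X → X → ℝ) (dY : Y → Y → ℝ)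
    (μ : Measure X) (ν : Measure Y) : ℝ :=
  Wp p (avgDist n p) (dmLaw n dX μ) (dmLaw n dY ν)

/-- The empirical measure `(1/n) Σ_{i} δ_{x i}` of an `n`-tuple of points. -/
def empMeas {Z : Type*} [MeasurableSpace Z] (n : ℕ) (x : Fin n → Z) : Measure Z :=
  (n : ℝ≥0∞)⁻¹ • ∑ i : Fin n, Measure.dirac (x i)

/-- The expected empirical Wasserstein approximation error `𝔼 W_p(μ, μ̂_n)`,
where the expectation is over `n` i.i.d. samples from `μ`. -/
def expEmpWp {X : Type*} [MeasurableSpace X] (p : ℝ) (d : X → X → ℝ)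
    (μ : Measure X) (n : ℕ) : ℝ :=
  ∫ x, Wp p d μ (empMeas n x) ∂(Measure.pi fun _ : Fin n => μ)

/-- The dual norm `‖θ‖_{q,dual} = N_n^{1/p} ‖θ‖_q`, with `q` the Hölder conjugate
of `p` (`q = ∞` when `p = 1`). -/
def dualNorm (n : ℕ) (p : ℝ) (θ : PairIdx n → ℝ) : ℝ :=
  if p = 1 then (n.choose 2 : ℝ) * ⨆ ij : PairIdx n, |θ ij|
  else (n.choose 2 : ℝ) ^ (1 / p) *
    (∑ ij : PairIdx n, |θ ij| ^ (p / (p - 1))) ^ ((p - 1) / p)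

/-- The linear projection `P_θ(a) = ⟨θ, a⟩` on distance matrices. -/
def proj (n : ℕ) (θ : PairIdx n → ℝ) (a : PairIdx n → ℝ) : ℝ :=
  ∑ ij : PairIdx n, θ ij * a ij

/-- The sliced Distance-Matrix Wasserstein statistic
`SDMW_{n,p}(𝒳,𝒴) = (𝔼_{θ∼σ} W_p^p((P_θ)_# ρ_X^{(n)}, (P_θ)_# ρ_Y^{(n)}))^{1/p}`. -/
def SDMW {X Y : Type*} [MeasurableSpace X] [MeasurableSpace Y]
    (n : ℕ) (p : ℝ) (σ : Measure (PairIdx n → ℝ))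
    (dX : X → X → ℝ) (dY : Y → Y → ℝ) (μ : Measure X) (ν : Measure Y) : ℝ :=
  (∫ θ, Wp p (fun s t : ℝ => |s - t|)
      ((dmLaw n dX μ).map (proj n θ)) ((dmLaw n dY ν).map (proj n θ)) ^ p ∂σ) ^ (1 / p)

/-- The support of a measure with respect to an explicit distance function. -/
def suppOf {X : Type*} [MeasurableSpace X] (d : X → X → ℝ) (μ : Measure X) : Set X :=
  {x | ∀ ε : ℝ, 0 < ε → 0 < μ {y | d x y < ε}}

/-- Two metric measure spaces are measure-preserving isometric: there is a surjective
isometry between the supports pushing the first measure to the second. -/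
def MPIsoD {X Y : Type*} [MeasurableSpace X] [MeasurableSpace Y]
    (dX : X → X → ℝ) (dY : Y → Y → ℝ) (μ : Measure X) (ν : Measure Y) : Prop :=
  ∃ φ : suppOf dX μ → suppOf dY ν,
    Function.Surjective φ ∧
    (∀ a b : suppOf dX μ, dY (φ a).1 (φ b).1 = dX a.1 b.1) ∧
    (μ.comap (Subtype.val : suppOf dX μ → X)).map φ =
      ν.comap (Subtype.val : suppOf dY ν → Y)

/-! ### Auxiliary lemmas -/

lemma pairIdx_card (n : ℕ) : Fintype.card (PairIdx n) = n.choose 2 := by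
  have e : PairIdx n ≃ Σ j : Fin n, Fin j.val :=
    { toFun := fun p => ⟨p.1.2, ⟨p.1.1.val, p.2⟩⟩
      invFun := fun s => ⟨(⟨s.2.val, s.2.isLt.trans s.1.isLt⟩, s.1), s.2.isLt⟩
      left_inv := fun p => rfl
      right_inv := fun s => rfl }
  rw [Fintype.card_congr e, Fintype.card_sigma]
  simp only [Fintype.card_fin]
  rw [Fin.sum_univ_eq_sum_range (fun i => i) n, Finset.sum_range_id, Nat.choose_two_right]

lemma rpow_const_continuous {q : ℝ} (hq : 0 ≤ q) : Continuous fun x : ℝ => x ^ q := by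
  rw [continuous_iff_continuousAt]
  exact fun x => Real.continuousAt_rpow_const x q (Or.inr hq)

/-- The pair-evaluation map pushes a product of `n` copies of `π` to `π.prod π`. -/
lemma pairEval_measurePreserving {Z : Type*} [MeasurableSpace Z]
    (π : Measure Z) [IsProbabilityMeasure π] {n : ℕ} {i j : Fin n} (hij : i ≠ j) :
    MeasurePreserving (fun w : Fin n → Z => (w i, w j))
      (Measure.pi fun _ => π) (π.prod π) := by
  classical
  refine ⟨(measurable_pi_apply i).prodMk (measurable_pi_apply j), ?_⟩
  refine (Measure.prod_eq fun s t hs ht => ?_).symm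
  rw [Measure.map_apply ((measurable_pi_apply i).prodMk (measurable_pi_apply j))
    (hs.prod ht)]
  have hpre : (fun w : Fin n → Z => (w i, w j)) ⁻¹' (s ×ˢ t) =
      Set.pi Set.univ (fun k => if k = i then s else if k = j then t else Set.univ) := by
    ext w
    simp only [Set.mem_preimage, Set.mem_prod, Set.mem_pi, Set.mem_univ, true_implies]
    constructor
    · rintro ⟨h1, h2⟩ k
      by_cases hk : k = i
      · subst hk; simp [h1]
      · by_cases hk' : k = j
        · subst hk'; simp [hk, h2]
        · simp [hk, hk']
    · intro h
      have h1 := h i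
      have h2 := h j
      simp only [if_pos rfl] at h1
      rw [if_neg (by exact hij.symm), if_pos rfl] at h2
      exact ⟨h1, h2⟩
  rw [hpre, Measure.pi_pi]
  have hval : ∀ k : Fin n,
      π (if k = i then s else if k = j then t else Set.univ) =
      (if k = i then π s else if k = j then π t else 1) := by
    intro k
    split_ifs <;> simp [measure_univ]
  simp only [hval]
  rw [← Finset.mul_prod_erase Finset.univ _ (Finset.mem_univ i)]
  rw [if_pos rfl]
  rw [← Finset.mul_prod_erase _ _
    (Finset.mem_erase.mpr ⟨hij.symm, Finset.mem_univ j⟩)]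
  rw [if_neg hij.symm, if_pos rfl]
  rw [Finset.prod_eq_one, mul_one]
  intro k hk
  simp only [Finset.mem_erase] at hk
  rw [if_neg hk.2.1, if_neg hk.1]

lemma dmMap_measurable {X : Type*} [MetricSpace X] [CompactSpace X] [MeasurableSpace X]
    [BorelSpace X] (n : ℕ) : Measurable (dmMap n (dist : X → X → ℝ)) := by
  haveI : SecondCountableTopology X := UniformSpace.secondCountable_of_separable X
  exact measurable_pi_lambda _ fun ij =>
    (measurable_pi_apply ij.1.1).dist (measurable_pi_apply ij.1.2)

/-- **DMW is a GW lower bound.**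
For all compact metric measure spaces `𝒳 = (X, dist, μ)` and `𝒴 = (Y, dist, ν)`,
every `n ≥ 2` and every `p ≥ 1`, `DMW_{n,p}(𝒳,𝒴) ≤ GW_p(𝒳,𝒴)`. -/
theorem dmw_le_gw {X Y : Type*}
    [MetricSpace X] [CompactSpace X] [MeasurableSpace X] [BorelSpace X]
    [MetricSpace Y] [CompactSpace Y] [MeasurableSpace Y] [BorelSpace Y]
    (μ : Measure X) (ν : Measure Y) [IsProbabilityMeasure μ] [IsProbabilityMeasure ν]
    (n : ℕ) (hn : 2 ≤ n) (p : ℝ) (hp : 1 ≤ p) :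
    DMW n p dist dist μ ν ≤ GW p dist dist μ ν := by
  haveI : SecondCountableTopology X := UniformSpace.secondCountable_of_separable X
  haveI : SecondCountableTopology Y := UniformSpace.secondCountable_of_separable Y
  have hp0 : (0:ℝ) < p := lt_of_lt_of_le one_pos hp
  have hppos : p ≠ 0 := ne_of_gt hp0
  have hNpos : (0:ℝ) < (n.choose 2 : ℝ) := by
    exact_mod_cast Nat.choose_pos hn
  unfold DMW Wp GW
  set SW := {c : ℝ | ∃ γ ∈ couplings (dmLaw n (dist : X → X → ℝ) μ)
      (dmLaw n (dist : Y → Y → ℝ) ν), c = ∫ z, avgDist n p z.1 z.2 ^ p ∂γ} with hSWdef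
  set SG := {c : ℝ | ∃ π ∈ couplings μ ν,
      c = ∫ w, |dist w.1.1 w.2.1 - dist w.1.2 w.2.2| ^ p ∂(π.prod π)} with hSGdef
  -- every element of SW is nonneg
  have hSWnonneg : ∀ c ∈ SW, (0:ℝ) ≤ c := by
    rintro c ⟨γ, -, rfl⟩
    refine integral_nonneg fun z => ?_
    refine Real.rpow_nonneg (Real.rpow_nonneg ?_ _) _
    positivity
  -- SG is nonempty (product coupling)
  have hSGne : SG.Nonempty := by
    refine ⟨_, μ.prod ν, ⟨?_, ?_⟩, rfl⟩
    · ext s hs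
      rw [Measure.map_apply measurable_fst hs]
      have : (Prod.fst : X × Y → X) ⁻¹' s = s ×ˢ Set.univ := by
        ext z; simp
      rw [this, Measure.prod_prod, measure_univ, mul_one]
    · ext s hs
      rw [Measure.map_apply measurable_snd hs]
      have : (Prod.snd : X × Y → Y) ⁻¹' s = Set.univ ×ˢ s := by
        ext z; simp
      rw [this, Measure.prod_prod, measure_univ, one_mul]
  -- SG ⊆ SW
  have hsubset : SG ⊆ SW := by
    rintro c ⟨π, ⟨hπ1, hπ2⟩, rfl⟩
    haveI : IsProbabilityMeasure π := ⟨by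
      have h := congrArg (fun m : Measure X => m Set.univ) hπ1
      simpa [Measure.map_apply measurable_fst MeasurableSet.univ] using h⟩
    set PP : Measure (Fin n → X × Y) := Measure.pi fun _ => π with hPPdef
    set F : (Fin n → X × Y) → (PairIdx n → ℝ) × (PairIdx n → ℝ) :=
      fun w => (dmMap n dist fun i => (w i).1, dmMap n dist fun i => (w i).2) with hFdef
    have hfst : Measurable fun w : Fin n → X × Y => (fun i => (w i).1 : Fin n → X) :=
      measurable_pi_lambda _ fun i => measurable_fst.comp (measurable_pi_apply i)
    have hsnd : Measurable fun w : Fin n → X × Y => (fun i => (w i).2 : Fin n → Y) :=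
      measurable_pi_lambda _ fun i => measurable_snd.comp (measurable_pi_apply i)
    have hF : Measurable F :=
      ((dmMap_measurable n).comp hfst).prodMk ((dmMap_measurable n).comp hsnd)
    -- the marginals of PP.map F are the distance-matrix laws
    have hmargX : (PP.map F).map Prod.fst = dmLaw n (dist : X → X → ℝ) μ := by
      rw [Measure.map_map measurable_fst hF]
      have hcomp : (Prod.fst ∘ F) =
          (dmMap n dist) ∘ (fun w : Fin n → X × Y => fun i => (w i).1) := rfl
      have h1 : MeasurePreserving (fun w : Fin n → X × Y => fun i => (w i).1)
          PP (Measure.pi fun _ : Fin n => μ) :=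
        measurePreserving_pi _ _ (fun _ => ⟨measurable_fst, hπ1⟩)
      rw [hcomp, ← Measure.map_map (dmMap_measurable n) hfst, h1.map_eq]
      rfl
    have hmargY : (PP.map F).map Prod.snd = dmLaw n (dist : Y → Y → ℝ) ν := by
      rw [Measure.map_map measurable_snd hF]
      have hcomp : (Prod.snd ∘ F) =
          (dmMap n dist) ∘ (fun w : Fin n → X × Y => fun i => (w i).2) := rfl
      have h1 : MeasurePreserving (fun w : Fin n → X × Y => fun i => (w i).2)
          PP (Measure.pi fun _ : Fin n => ν) :=
        measurePreserving_pi _ _ (fun _ => ⟨measurable_snd, hπ2⟩)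
      rw [hcomp, ← Measure.map_map (dmMap_measurable n) hsnd, h1.map_eq]
      rfl
    refine ⟨PP.map F, ⟨hmargX, hmargY⟩, ?_⟩
    -- cost computation
    have hg : Continuous fun z : (PairIdx n → ℝ) × (PairIdx n → ℝ) =>
        avgDist n p z.1 z.2 ^ p := by
      unfold avgDist
      refine (rpow_const_continuous hp0.le).comp ?_
      refine (rpow_const_continuous (by positivity : (0:ℝ) ≤ 1/p)).comp ?_
      refine continuous_const.mul (continuous_finset_sum _ fun ij _ => ?_)
      exact (rpow_const_continuous hp0.le).comp
        (((continuous_apply ij).comp continuous_fst).sub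
          ((continuous_apply ij).comp continuous_snd)).abs
    rw [integral_map hF.aemeasurable hg.aestronglyMeasurable]
    -- pointwise simplification of the integrand
    have hpt : ∀ w : Fin n → X × Y, avgDist n p (F w).1 (F w).2 ^ p =
        (n.choose 2 : ℝ)⁻¹ * ∑ ij : PairIdx n,
          |dist (w ij.1.1).1 (w ij.1.2).1 - dist (w ij.1.1).2 (w ij.1.2).2| ^ p := by
      intro w
      have hbase : (0:ℝ) ≤ (n.choose 2 : ℝ)⁻¹ *
          ∑ ij : PairIdx n, |(F w).1 ij - (F w).2 ij| ^ p := by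
        positivity
      unfold avgDist
      rw [← Real.rpow_mul hbase, one_div, inv_mul_cancel₀ hppos, Real.rpow_one]
      rfl
    simp only [hpt]
    -- integrability of each pair term
    have hcont : ∀ ij : PairIdx n, Continuous fun w : Fin n → X × Y =>
        |dist (w ij.1.1).1 (w ij.1.2).1 - dist (w ij.1.1).2 (w ij.1.2).2| ^ p := by
      intro ij
      exact (rpow_const_continuous hp0.le).comp
        ((Continuous.dist (continuous_fst.comp (continuous_apply ij.1.1))
            (continuous_fst.comp (continuous_apply ij.1.2))).sub
          (Continuous.dist (continuous_snd.comp (continuous_apply ij.1.1))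
            (continuous_snd.comp (continuous_apply ij.1.2)))).abs
    have hint : ∀ ij : PairIdx n, Integrable (fun w : Fin n → X × Y =>
        |dist (w ij.1.1).1 (w ij.1.2).1 - dist (w ij.1.1).2 (w ij.1.2).2| ^ p) PP := by
      intro ij
      have := ((hcont ij).continuousOn).integrableOn_compact (μ := PP) isCompact_univ
      rwa [integrableOn_univ] at this
    rw [integral_const_mul, integral_finset_sum _ fun ij _ => hint ij]
    -- each pair term integrates to the GW cost
    have hpairint : ∀ ij : PairIdx n,
        ∫ w, |dist (w ij.1.1).1 (w ij.1.2).1 - dist (w ij.1.1).2 (w ij.1.2).2| ^ p ∂PP =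
        ∫ w, |dist w.1.1 w.2.1 - dist w.1.2 w.2.2| ^ p ∂(π.prod π) := by
      intro ij
      have hne : ij.1.1 ≠ ij.1.2 := ne_of_lt ij.2
      have hpair := pairEval_measurePreserving π (n := n) hne
      have hG : Continuous fun z : (X × Y) × (X × Y) =>
          |dist z.1.1 z.2.1 - dist z.1.2 z.2.2| ^ p :=
        (rpow_const_continuous hp0.le).comp
          ((Continuous.dist (continuous_fst.comp continuous_fst)
              (continuous_fst.comp continuous_snd)).sub
            (Continuous.dist (continuous_snd.comp continuous_fst)
              (continuous_snd.comp continuous_snd))).abs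
      rw [← hpair.map_eq, integral_map hpair.measurable.aemeasurable
        hG.aestronglyMeasurable]
    simp only [hpairint]
    rw [Finset.sum_const, Finset.card_univ, pairIdx_card, nsmul_eq_mul, ← mul_assoc,
      inv_mul_cancel₀ (ne_of_gt hNpos), one_mul]
  -- conclude
  have hbdd : BddBelow SW := ⟨0, fun c hc => hSWnonneg c hc⟩
  exact Real.rpow_le_rpow (Real.sInf_nonneg hSWnonneg)
    (csInf_le_csInf hbdd hSGne hsubset) (by positivity)
end
end

section
/- Let 𝒳 = (X, d_X, μ), 𝒴 = (Y, d_Y, ν), and 𝒵 = (Z, d_Z, ζ) be compact metric measure spaces and p ≥ 1. Then the Gromov–Wasserstein distance satisfies the triangle inequality GW_p(𝒳, 𝒵) ≤ GW_p(𝒳, 𝒴) + GW_p(𝒴, 𝒵). -/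
open MeasureTheory Filter
open scoped ENNReal NNReal

noncomputable section

/-!
Glue two couplings `π₁` of `(μ, ν)` and `π₂` of `(ν, ζ)` along `Y` by disintegrating `π₂`
with respect to its first marginal: this gives a measure `m` on `(X × Y) × Z` whose
`X × Y`- and `Y × Z`-marginals are `π₁` and `π₂`, so that its `X × Z`-marginal couples `μ`
and `ζ`. Under `m ⊗ m` the three distortions satisfy
`dX - dZ = (dX - dY) + (dY - dZ)`, and Minkowski's inequality in `L^p(m ⊗ m)` bounds the
`p`-th root of the cost of the glued coupling by the sum of those of `π₁` and `π₂`.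
Taking infima over `π₁` and `π₂` gives the triangle inequality.
-/

open ProbabilityTheory

lemma csInf_le_csInf_add_csInf {M : Type*} [ConditionallyCompleteLattice M] [AddGroup M]
    [AddLeftMono M] [AddRightMono M] {s t u : Set M} (hs : s.Nonempty) (hs' : BddBelow s)
    (ht : t.Nonempty) (ht' : BddBelow t) (hu : BddBelow u)
    (h : ∀ a ∈ s, ∀ b ∈ t, ∃ c ∈ u, c ≤ a + b) :
    sInf u ≤ sInf s + sInf t := by
  rw [← csInf_add hs hs' ht ht']
  refine le_csInf (hs.add ht) ?_
  rintro _ ⟨a, ha, b, hb, rfl⟩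
  obtain ⟨c, hc, hcab⟩ := h a ha b hb
  exact (csInf_le hu hc).trans hcab

lemma Real.csInf_image_rpow {s : Set ℝ} (hs : s.Nonempty) (hs₀ : ∀ x ∈ s, 0 ≤ x) {r : ℝ}
    (hr : 0 ≤ r) : sInf ((· ^ r) '' s) = sInf s ^ r :=
  (MonotoneOn.map_csInf_of_continuousWithinAt
    (Real.continuous_rpow_const hr).continuousWithinAt
    (fun _ hx _ _ hxy => Real.rpow_le_rpow (hs₀ _ hx) hxy hr) hs ⟨0, hs₀⟩).symm

lemma integral_rpow_abs_add_le {α : Type*} [MeasurableSpace α] {μ : Measure α} {p : ℝ}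
    (hp : 1 ≤ p) {f g : α → ℝ} (hf : MemLp f (.ofReal p) μ) (hg : MemLp g (.ofReal p) μ) :
    (∫ x, |f x + g x| ^ p ∂μ) ^ (1 / p) ≤
      (∫ x, |f x| ^ p ∂μ) ^ (1 / p) + (∫ x, |g x| ^ p ∂μ) ^ (1 / p) := by
  have hp₀ : 0 < p := by linarith
  have h_eLpNorm : ∀ u : α → ℝ, MemLp u (.ofReal p) μ →
      (∫ x, |u x| ^ p ∂μ) ^ (1 / p) = (eLpNorm u (.ofReal p) μ).toReal := by
    intro u hu
    rw [hu.eLpNorm_eq_integral_rpow_norm (by simpa using hp₀) ENNReal.ofReal_ne_top,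
      ENNReal.toReal_ofReal (by positivity), ENNReal.toReal_ofReal hp₀.le, one_div]
    simp only [Real.norm_eq_abs]
  rw [h_eLpNorm (fun x => f x + g x) (hf.add hg), h_eLpNorm f hf, h_eLpNorm g hg,
    ← ENNReal.toReal_add hf.eLpNorm_ne_top hg.eLpNorm_ne_top]
  exact ENNReal.toReal_mono (ENNReal.add_ne_top.2 ⟨hf.eLpNorm_ne_top, hg.eLpNorm_ne_top⟩)
    (eLpNorm_add_le hf.1 hg.1 (by simpa using hp))

section Couplings

variable {X Y Z : Type*} [MeasurableSpace X] [MeasurableSpace Y] [MeasurableSpace Z]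

lemma couplings_nonempty (μ : Measure X) (ν : Measure Y) [IsProbabilityMeasure μ]
    [IsProbabilityMeasure ν] : (couplings μ ν).Nonempty :=
  ⟨μ.prod ν, Measure.fst_prod, Measure.snd_prod⟩

lemma isProbabilityMeasure_of_mem_couplings {μ : Measure X} {ν : Measure Y}
    [IsProbabilityMeasure μ] {π : Measure (X × Y)} (h : π ∈ couplings μ ν) :
    IsProbabilityMeasure π := by
  have : IsProbabilityMeasure (π.map Prod.fst) := h.1 ▸ ‹_›
  exact Measure.isProbabilityMeasure_of_map Prod.fst

lemma Measure.map_prodMap_compProd_comap {W : Type*} [MeasurableSpace W] (μ : Measure W)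
    [SFinite μ] (κ : Kernel Y Z) [IsSFiniteKernel κ] {f : W → Y} (hf : Measurable f) :
    (μ ⊗ₘ κ.comap f hf).map (Prod.map f id) = μ.map f ⊗ₘ κ := by
  ext s hs
  rw [Measure.map_apply (hf.prodMap measurable_id) hs,
    Measure.compProd_apply (hf.prodMap measurable_id hs), Measure.compProd_apply hs,
    lintegral_map (Kernel.measurable_kernel_prodMk_left hs) hf]
  rfl

lemma exists_gluing [StandardBorelSpace Z] [Nonempty Z] {π₁ : Measure (X × Y)}
    {π₂ : Measure (Y × Z)} [SFinite π₁] [IsFiniteMeasure π₂]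
    (h : π₁.map Prod.snd = π₂.map Prod.fst) :
    ∃ m : Measure ((X × Y) × Z),
      m.map Prod.fst = π₁ ∧ m.map (Prod.map Prod.snd id) = π₂ :=
  ⟨π₁ ⊗ₘ π₂.condKernel.comap Prod.snd measurable_snd, Measure.fst_compProd _ _, by
    rw [Measure.map_prodMap_compProd_comap, h]
    exact π₂.disintegrate _⟩

lemma map_mem_couplings_of_gluing {μ : Measure X} {ν : Measure Y} {ζ : Measure Z}
    {m : Measure ((X × Y) × Z)} (h₁ : m.map Prod.fst ∈ couplings μ ν)
    (h₂ : m.map (Prod.map Prod.snd id) ∈ couplings ν ζ) :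
    m.map (Prod.map Prod.fst id) ∈ couplings μ ζ := by
  constructor
  · rw [Measure.map_map measurable_fst (by fun_prop), ← h₁.1,
      Measure.map_map measurable_fst measurable_fst]
    rfl
  · rw [Measure.map_map measurable_snd (by fun_prop), ← h₂.2,
      Measure.map_map measurable_snd (by fun_prop)]
    rfl

end Couplings

section GWCost

variable {X Y Z : Type*} [MeasurableSpace X] [MeasurableSpace Y] [MeasurableSpace Z]

def gwCost (p : ℝ) (dX : X → X → ℝ) (dY : Y → Y → ℝ) (π : Measure (X × Y)) : ℝ :=
  ∫ w, |dX w.1.1 w.2.1 - dY w.1.2 w.2.2| ^ p ∂(π.prod π)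

lemma gwCost_nonneg (p : ℝ) (dX : X → X → ℝ) (dY : Y → Y → ℝ) (π : Measure (X × Y)) :
    0 ≤ gwCost p dX dY π :=
  integral_nonneg fun _ => by positivity

lemma bddBelow_image_gwCost_rpow (p : ℝ) (dX : X → X → ℝ) (dY : Y → Y → ℝ)
    (s : Set (Measure (X × Y))) : BddBelow ((fun π => gwCost p dX dY π ^ (1 / p)) '' s) :=
  ⟨0, by rintro _ ⟨π, -, rfl⟩; exact Real.rpow_nonneg (gwCost_nonneg p dX dY π) _⟩

lemma GW_eq_csInf {p : ℝ} (hp : 0 ≤ p) (dX : X → X → ℝ) (dY : Y → Y → ℝ) (μ : Measure X)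
    (ν : Measure Y) [IsProbabilityMeasure μ] [IsProbabilityMeasure ν] :
    GW p dX dY μ ν = sInf ((fun π => gwCost p dX dY π ^ (1 / p)) '' couplings μ ν) := by
  have hGW : GW p dX dY μ ν = sInf (gwCost p dX dY '' couplings μ ν) ^ (1 / p) := by
    simp only [GW, gwCost, Set.image, eq_comm]
  rw [hGW, ← Set.image_image (· ^ (1 / p)), Real.csInf_image_rpow
    ((couplings_nonempty μ ν).image _)
    (by rintro _ ⟨π, -, rfl⟩; exact gwCost_nonneg p dX dY π) (by positivity)]

variable [PseudoMetricSpace X] [SecondCountableTopology X] [BorelSpace X]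
  [PseudoMetricSpace Y] [SecondCountableTopology Y] [BorelSpace Y]

lemma gwCost_map {W : Type*} [MeasurableSpace W] (p : ℝ) (m : Measure W) [SFinite m]
    {f : W → X × Y} (hf : Measurable f) :
    gwCost p dist dist (m.map f) =
      ∫ v, |dist (f v.1).1 (f v.2).1 - dist (f v.1).2 (f v.2).2| ^ p ∂(m.prod m) := by
  rw [gwCost, Measure.map_prod_map _ _ hf hf,
    integral_map (hf.prodMap hf).aemeasurable (by fun_prop : Measurable _).aestronglyMeasurable]
  rfl

end GWCost

theorem exists_gwCost_rpow_le_add {X Y Z : Type*}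
    [MetricSpace X] [CompactSpace X] [MeasurableSpace X] [BorelSpace X]
    [MetricSpace Y] [CompactSpace Y] [MeasurableSpace Y] [BorelSpace Y]
    [MetricSpace Z] [CompactSpace Z] [MeasurableSpace Z] [BorelSpace Z]
    {μ : Measure X} {ν : Measure Y} {ζ : Measure Z}
    [IsProbabilityMeasure μ] [IsProbabilityMeasure ν] [IsProbabilityMeasure ζ]
    {p : ℝ} (hp : 1 ≤ p) {π₁ : Measure (X × Y)} {π₂ : Measure (Y × Z)}
    (h₁ : π₁ ∈ couplings μ ν) (h₂ : π₂ ∈ couplings ν ζ) :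
    ∃ π ∈ couplings μ ζ, gwCost p dist dist π ^ (1 / p) ≤
      gwCost p dist dist π₁ ^ (1 / p) + gwCost p dist dist π₂ ^ (1 / p) := by
  have := isProbabilityMeasure_of_mem_couplings h₁
  have := isProbabilityMeasure_of_mem_couplings h₂
  have : Nonempty Z := ζ.nonempty_of_neZero
  obtain ⟨m, hm₁, hm₂⟩ := exists_gluing (h₁.2.trans h₂.1.symm)
  have : IsProbabilityMeasure (m.map Prod.fst) := hm₁ ▸ ‹_›
  have := Measure.isProbabilityMeasure_of_map (μ := m) Prod.fst
  refine ⟨_, map_mem_couplings_of_gluing (hm₁ ▸ h₁) (hm₂ ▸ h₂), ?_⟩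
  rw [← hm₁, ← hm₂, gwCost_map p m measurable_fst, gwCost_map p m (by fun_prop),
    gwCost_map p m (by fun_prop)]
  have hXY : MemLp (fun v : ((X × Y) × Z) × ((X × Y) × Z) =>
      dist v.1.1.1 v.2.1.1 - dist v.1.1.2 v.2.1.2) (.ofReal p) (m.prod m) :=
    (by fun_prop : Continuous _).memLp_of_hasCompactSupport (.of_compactSpace _)
  have hYZ : MemLp (fun v : ((X × Y) × Z) × ((X × Y) × Z) =>
      dist v.1.1.2 v.2.1.2 - dist v.1.2 v.2.2) (.ofReal p) (m.prod m) :=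
    (by fun_prop : Continuous _).memLp_of_hasCompactSupport (.of_compactSpace _)
  simpa only [sub_add_sub_cancel, Prod.map_fst, Prod.map_snd, id_eq]
    using integral_rpow_abs_add_le hp hXY hYZ

/-- **Triangle inequality for GW.**
`GW_p(𝒳,𝒵) ≤ GW_p(𝒳,𝒴) + GW_p(𝒴,𝒵)` for compact metric measure spaces. -/
theorem gw_triangle {X Y Z : Type*}
    [MetricSpace X] [CompactSpace X] [MeasurableSpace X] [BorelSpace X]
    [MetricSpace Y] [CompactSpace Y] [MeasurableSpace Y] [BorelSpace Y]
    [MetricSpace Z] [CompactSpace Z] [MeasurableSpace Z] [BorelSpace Z]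
    (μ : Measure X) (ν : Measure Y) (ζ : Measure Z)
    [IsProbabilityMeasure μ] [IsProbabilityMeasure ν] [IsProbabilityMeasure ζ]
    (p : ℝ) (hp : 1 ≤ p) :
    GW p dist dist μ ζ ≤ GW p dist dist μ ν + GW p dist dist ν ζ := by
  have hp₀ : 0 ≤ p := by linarith
  rw [GW_eq_csInf hp₀, GW_eq_csInf hp₀, GW_eq_csInf hp₀]
  refine csInf_le_csInf_add_csInf ((couplings_nonempty μ ν).image _)
    (bddBelow_image_gwCost_rpow ..) ((couplings_nonempty ν ζ).image _)
    (bddBelow_image_gwCost_rpow ..) (bddBelow_image_gwCost_rpow ..) ?_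
  rintro _ ⟨π₁, h₁, rfl⟩ _ ⟨π₂, h₂, rfl⟩
  obtain ⟨π, hπ, hle⟩ := exists_gwCost_rpow_le_add hp h₁ h₂
  exact ⟨_, ⟨π, hπ, rfl⟩, hle⟩
end
end

section
/- Let (X, d) be a compact metric space, let μ and μ' be Borel probability measures on X, and let p ≥ 1. Then GW_p((X, d, μ), (X, d, μ')) ≤ 2 W_p(μ, μ'). -/
open MeasureTheory Filter
open scoped ENNReal NNReal

noncomputable section

lemma aux_conv {a b p : ℝ} (ha : 0 ≤ a) (hb : 0 ≤ b) (hp : 1 ≤ p) :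
    (a + b) ^ p ≤ 2 ^ (p - 1) * (a ^ p + b ^ p) := by
  lift a to ℝ≥0 using ha
  lift b to ℝ≥0 using hb
  exact_mod_cast NNReal.rpow_add_le_mul_rpow_add_rpow a b hp

lemma aux_integrable {Z : Type*} [TopologicalSpace Z] [CompactSpace Z] [MeasurableSpace Z]
    [OpensMeasurableSpace Z] (ν : Measure Z) [IsFiniteMeasure ν] {f : Z → ℝ}
    (hf : Continuous f) : Integrable f ν := by
  obtain ⟨C, hC⟩ := (isCompact_range hf).isBounded.exists_norm_le
  exact ⟨hf.aestronglyMeasurable, HasFiniteIntegral.of_bounded (C := C)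
    (ae_of_all _ fun x => hC _ ⟨x, rfl⟩)⟩

lemma aux_key {X : Type*} [MetricSpace X] [CompactSpace X] [MeasurableSpace X] [BorelSpace X]
    (π : Measure (X × X)) [IsProbabilityMeasure π] (p : ℝ) (hp : 1 ≤ p) :
    ∫ w, |dist w.1.1 w.2.1 - dist w.1.2 w.2.2| ^ p ∂(π.prod π)
      ≤ 2 ^ p * ∫ z, dist z.1 z.2 ^ p ∂π := by
  have hp0 : (0:ℝ) < p := lt_of_lt_of_le one_pos hp
  have hd : Continuous fun z : X × X => dist z.1 z.2 ^ p :=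
    (continuous_fst.dist continuous_snd).rpow_const (fun z => Or.inr hp0.le)
  have hg : Continuous fun w : (X × X) × (X × X) =>
      |dist w.1.1 w.2.1 - dist w.1.2 w.2.2| ^ p := by
    apply Continuous.rpow_const _ (fun w => Or.inr hp0.le)
    exact (((continuous_fst.fst.dist continuous_snd.fst).sub
      (continuous_fst.snd.dist continuous_snd.snd))).abs
  have hf1 : Continuous fun w : (X × X) × (X × X) => dist w.1.1 w.1.2 ^ p := hd.comp continuous_fst
  have hf2 : Continuous fun w : (X × X) × (X × X) => dist w.2.1 w.2.2 ^ p := hd.comp continuous_snd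
  have hbound : ∀ w : (X × X) × (X × X),
      |dist w.1.1 w.2.1 - dist w.1.2 w.2.2| ^ p
        ≤ 2 ^ (p - 1) * (dist w.1.1 w.1.2 ^ p + dist w.2.1 w.2.2 ^ p) := by
    intro w
    have h1 : |dist w.1.1 w.2.1 - dist w.1.2 w.2.2| ≤ dist w.1.1 w.1.2 + dist w.2.1 w.2.2 := by
      have := dist_dist_dist_le w.1.1 w.2.1 w.1.2 w.2.2
      rwa [Real.dist_eq] at this
    calc |dist w.1.1 w.2.1 - dist w.1.2 w.2.2| ^ p
        ≤ (dist w.1.1 w.1.2 + dist w.2.1 w.2.2) ^ p :=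
          Real.rpow_le_rpow (abs_nonneg _) h1 hp0.le
      _ ≤ 2 ^ (p - 1) * (dist w.1.1 w.1.2 ^ p + dist w.2.1 w.2.2 ^ p) :=
          aux_conv dist_nonneg dist_nonneg hp
  have h1 : ∫ w, dist w.1.1 w.1.2 ^ p ∂(π.prod π) = ∫ z, dist z.1 z.2 ^ p ∂π := by
    rw [show ∫ w, dist w.1.1 w.1.2 ^ p ∂(π.prod π)
        = ∫ z, dist z.1 z.2 ^ p ∂((π.prod π).map Prod.fst) from
      (integral_map measurable_fst.aemeasurable hd.aestronglyMeasurable).symm,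
      ← Measure.fst, Measure.fst_prod]
  have h2 : ∫ w, dist w.2.1 w.2.2 ^ p ∂(π.prod π) = ∫ z, dist z.1 z.2 ^ p ∂π := by
    rw [show ∫ w, dist w.2.1 w.2.2 ^ p ∂(π.prod π)
        = ∫ z, dist z.1 z.2 ^ p ∂((π.prod π).map Prod.snd) from
      (integral_map measurable_snd.aemeasurable hd.aestronglyMeasurable).symm,
      ← Measure.snd, Measure.snd_prod]
  calc ∫ w, |dist w.1.1 w.2.1 - dist w.1.2 w.2.2| ^ p ∂(π.prod π)
      ≤ ∫ w, 2 ^ (p - 1) * (dist w.1.1 w.1.2 ^ p + dist w.2.1 w.2.2 ^ p) ∂(π.prod π) := by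
        apply integral_mono (aux_integrable _ hg)
          (((aux_integrable _ hf1).add (aux_integrable _ hf2)).const_mul _) hbound
    _ = 2 ^ (p - 1) * (∫ w, dist w.1.1 w.1.2 ^ p ∂(π.prod π)
          + ∫ w, dist w.2.1 w.2.2 ^ p ∂(π.prod π)) := by
        rw [integral_const_mul, integral_add (aux_integrable _ hf1) (aux_integrable _ hf2)]
    _ = 2 ^ p * ∫ z, dist z.1 z.2 ^ p ∂π := by
        rw [h1, h2, Real.rpow_sub (by norm_num : (0:ℝ) < 2), Real.rpow_one]
        ring

lemma coupling_prob {X Y : Type*} [MeasurableSpace X] [MeasurableSpace Y]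
    {μ : Measure X} {ν : Measure Y} [IsProbabilityMeasure μ] {π : Measure (X × Y)}
    (h : π ∈ couplings μ ν) : IsProbabilityMeasure π := by
  refine ⟨?_⟩
  calc π Set.univ = π.map Prod.fst Set.univ := by
        rw [Measure.map_apply measurable_fst MeasurableSet.univ, Set.preimage_univ]
    _ = μ Set.univ := by rw [h.1]
    _ = 1 := measure_univ

/-- **Same-space stability.**
For probability measures `μ, μ'` on a compact metric space `(X, d)`,
`GW_p((X,d,μ), (X,d,μ')) ≤ 2 W_p(μ, μ')`. -/
theorem same_space_stability {X : Type*}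
    [MetricSpace X] [CompactSpace X] [MeasurableSpace X] [BorelSpace X]
    (μ μ' : Measure X) [IsProbabilityMeasure μ] [IsProbabilityMeasure μ']
    (p : ℝ) (hp : 1 ≤ p) :
    GW p dist dist μ μ' ≤ 2 * Wp p dist μ μ' := by
  have hp0 : (0:ℝ) < p := lt_of_lt_of_le one_pos hp
  unfold GW Wp
  set Sg := {c : ℝ | ∃ π ∈ couplings μ μ',
      c = ∫ w, |dist w.1.1 w.2.1 - dist w.1.2 w.2.2| ^ p ∂(π.prod π)} with hSg
  set Sw := {c : ℝ | ∃ π ∈ couplings μ μ', c = ∫ z, dist z.1 z.2 ^ p ∂π} with hSw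
  have hprod : μ.prod μ' ∈ couplings μ μ' :=
    ⟨by rw [← Measure.fst, Measure.fst_prod], by rw [← Measure.snd, Measure.snd_prod]⟩
  have hSw_ne : Sw.Nonempty := ⟨_, μ.prod μ', hprod, rfl⟩
  have hSg_lb : ∀ c ∈ Sg, 0 ≤ c := by
    rintro c ⟨π, hπ, rfl⟩
    exact integral_nonneg fun w => Real.rpow_nonneg (abs_nonneg _) p
  have hSw_lb : ∀ c ∈ Sw, 0 ≤ c := by
    rintro c ⟨π, hπ, rfl⟩
    exact integral_nonneg fun z => Real.rpow_nonneg dist_nonneg p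
  have hSg_bdd : BddBelow Sg := ⟨0, hSg_lb⟩
  have hSg_nonneg : 0 ≤ sInf Sg := le_csInf ⟨_, μ.prod μ', hprod, rfl⟩ hSg_lb
  have hSw_nonneg : 0 ≤ sInf Sw := le_csInf hSw_ne hSw_lb
  have hmain : sInf Sg ≤ 2 ^ p * sInf Sw := by
    have h1 : ∀ c ∈ Sw, sInf Sg / 2 ^ p ≤ c := by
      rintro c ⟨π, hπ, rfl⟩
      haveI := coupling_prob hπ
      rw [div_le_iff₀ (by positivity : (0:ℝ) < 2 ^ p)]
      calc sInf Sg ≤ ∫ w, |dist w.1.1 w.2.1 - dist w.1.2 w.2.2| ^ p ∂(π.prod π) :=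
            csInf_le hSg_bdd ⟨π, hπ, rfl⟩
        _ ≤ 2 ^ p * ∫ z, dist z.1 z.2 ^ p ∂π := aux_key π p hp
        _ = (∫ z, dist z.1 z.2 ^ p ∂π) * 2 ^ p := mul_comm _ _
    have h2 : sInf Sg / 2 ^ p ≤ sInf Sw := le_csInf hSw_ne h1
    rwa [div_le_iff₀ (by positivity : (0:ℝ) < 2 ^ p), mul_comm] at h2
  calc sInf Sg ^ (1/p) ≤ (2 ^ p * sInf Sw) ^ (1/p) :=
        Real.rpow_le_rpow hSg_nonneg hmain (by positivity)
    _ = 2 * sInf Sw ^ (1/p) := by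
        rw [Real.mul_rpow (by positivity) hSw_nonneg,
          ← Real.rpow_mul (by norm_num : (0:ℝ) ≤ 2), mul_one_div_cancel hp0.ne',
          Real.rpow_one]
end
end

section
/- Let 𝒳 = (X, d_X, μ) and 𝒴 = (Y, d_Y, ν) be compact metric measure spaces, n ≥ 2, and let Γ be any coupling of ρ_X^{(n)} and ρ_Y^{(n)} (a probability measure on ℝ^{N_n} × ℝ^{N_n} with marginals ρ_X^{(n)} and ρ_Y^{(n)}). Then there exists a probability measure Λ on X^n × Y^n whose marginals are μ^{⊗n} and ν^{⊗n} and such that (T_X^{(n)}, T_Y^{(n)})_# Λ = Γ. -/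
open MeasureTheory Filter ProbabilityTheory
open scoped ENNReal NNReal

noncomputable section

lemma exists_lift_kernel {A B : Type*} [MeasurableSpace A] [StandardBorelSpace A]
    [Nonempty A] [MeasurableSpace B]
    (μA : Measure A) [IsProbabilityMeasure μA]
    (T : A → B) (hT : Measurable T)
    (hS : MeasurableSet {p : B × A | T p.2 = p.1}) :
    ∃ κ : Kernel B A, IsMarkovKernel κ ∧
      (∀ s : Set A, MeasurableSet s → ∫⁻ b, κ b s ∂(μA.map T) = μA s) ∧
      (∀ᵐ b ∂(μA.map T), κ b {a | T a = b} = 1) := by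
  have hm : Measurable fun a => (T a, a) := hT.prodMk measurable_id
  set m : Measure (B × A) := μA.map (fun a => (T a, a)) with hm_def
  haveI : IsProbabilityMeasure m := Measure.isProbabilityMeasure_map hm.aemeasurable
  have hfst : m.fst = μA.map T := by
    rw [Measure.fst, hm_def, Measure.map_map measurable_fst hm]
    rfl
  have hdis : m.fst ⊗ₘ m.condKernel = m := m.disintegrate m.condKernel
  refine ⟨m.condKernel, inferInstance, ?_, ?_⟩
  · intro s hs
    have h1 : (m.fst ⊗ₘ m.condKernel) (Set.univ ×ˢ s) = m (Set.univ ×ˢ s) := by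
      rw [hdis]
    rw [Measure.compProd_apply (MeasurableSet.univ.prod hs)] at h1
    have h2 : m (Set.univ ×ˢ s) = μA s := by
      rw [hm_def, Measure.map_apply hm (MeasurableSet.univ.prod hs)]
      congr 1
      ext a
      simp
    rw [← h2, ← h1, hfst]
    refine lintegral_congr fun b => ?_
    congr 1
    ext a; simp
  · -- concentration
    have hf : Measurable fun b => m.condKernel b (Prod.mk b ⁻¹' {p : B × A | T p.2 = p.1}) :=
      Kernel.measurable_kernel_prodMk_left hS
    have h1 : (m.fst ⊗ₘ m.condKernel) {p : B × A | T p.2 = p.1} = 1 := by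
      rw [hdis, hm_def, Measure.map_apply hm hS]
      have : (fun a => (T a, a)) ⁻¹' {p : B × A | T p.2 = p.1} = Set.univ := by
        ext a; simp
      rw [this]; exact measure_univ
    rw [Measure.compProd_apply hS] at h1
    -- a.e. equality
    have hle : ∀ b, m.condKernel b (Prod.mk b ⁻¹' {p : B × A | T p.2 = p.1}) ≤ 1 :=
      fun b => prob_le_one
    have hzero : ∫⁻ b, (1 - m.condKernel b (Prod.mk b ⁻¹' {p : B × A | T p.2 = p.1}))
        ∂m.fst = 0 := by
      rw [lintegral_sub hf (by rw [h1]; exact ENNReal.one_ne_top) (Filter.Eventually.of_forall hle),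
        lintegral_one, measure_univ, h1, tsub_self]
    have hae := (lintegral_eq_zero_iff (measurable_const.sub hf)).mp hzero
    rw [← hfst]
    filter_upwards [hae] with b hb
    have hb' : (1 : ℝ≥0∞) - m.condKernel b (Prod.mk b ⁻¹' {p : B × A | T p.2 = p.1}) = 0 := hb
    have : (1 : ℝ≥0∞) ≤ m.condKernel b (Prod.mk b ⁻¹' {p : B × A | T p.2 = p.1}) :=
      tsub_eq_zero_iff_le.mp hb'
    exact le_antisymm (hle b) this

/-- **Lifting lemma.**
Every coupling `Γ` of `ρ_X^{(n)}` and `ρ_Y^{(n)}` lifts to a probability measure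
`Λ` on `X^n × Y^n` with marginals `μ^{⊗n}` and `ν^{⊗n}` such that
`(T_X^{(n)}, T_Y^{(n)})_# Λ = Γ`. -/
theorem lifting_lemma {X Y : Type*}
    [MetricSpace X] [CompactSpace X] [MeasurableSpace X] [BorelSpace X]
    [MetricSpace Y] [CompactSpace Y] [MeasurableSpace Y] [BorelSpace Y]
    (μ : Measure X) (ν : Measure Y) [IsProbabilityMeasure μ] [IsProbabilityMeasure ν]
    (n : ℕ) (hn : 2 ≤ n)
    (Γ : Measure ((PairIdx n → ℝ) × (PairIdx n → ℝ)))
    (hΓ : Γ ∈ couplings (dmLaw n dist μ) (dmLaw n dist ν)) :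
    ∃ Λ : Measure ((Fin n → X) × (Fin n → Y)),
      Λ.map Prod.fst = Measure.pi (fun _ : Fin n => μ) ∧
      Λ.map Prod.snd = Measure.pi (fun _ : Fin n => ν) ∧
      Λ.map (fun w => (dmMap n dist w.1, dmMap n dist w.2)) = Γ := by
  classical
  haveI : Nonempty X := by
    by_contra h
    rw [not_nonempty_iff] at h
    have := measure_univ (μ := μ)
    rw [Set.univ_eq_empty_iff.mpr inferInstance, measure_empty] at this
    exact zero_ne_one this
  haveI : Nonempty Y := by
    by_contra h
    rw [not_nonempty_iff] at h
    have := measure_univ (μ := ν)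
    rw [Set.univ_eq_empty_iff.mpr inferInstance, measure_empty] at this
    exact zero_ne_one this
  have hTX : Measurable (dmMap n (dist : X → X → ℝ)) :=
    measurable_pi_iff.mpr fun _ => (measurable_pi_apply _).dist (measurable_pi_apply _)
  have hTY : Measurable (dmMap n (dist : Y → Y → ℝ)) :=
    measurable_pi_iff.mpr fun _ => (measurable_pi_apply _).dist (measurable_pi_apply _)
  have hSX : MeasurableSet {p : (PairIdx n → ℝ) × (Fin n → X) | dmMap n dist p.2 = p.1} :=
    measurableSet_eq_fun (hTX.comp measurable_snd) measurable_fst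
  have hSY : MeasurableSet {p : (PairIdx n → ℝ) × (Fin n → Y) | dmMap n dist p.2 = p.1} :=
    measurableSet_eq_fun (hTY.comp measurable_snd) measurable_fst
  obtain ⟨κ, hκM, hκint, hκae⟩ :=
    exists_lift_kernel (Measure.pi fun _ : Fin n => μ) (dmMap n dist) hTX hSX
  obtain ⟨κ', hκ'M, hκ'int, hκ'ae⟩ :=
    exists_lift_kernel (Measure.pi fun _ : Fin n => ν) (dmMap n dist) hTY hSY
  haveI := hκM
  haveI := hκ'M
  haveI : IsProbabilityMeasure (dmLaw n dist μ) :=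
    Measure.isProbabilityMeasure_map hTX.aemeasurable
  haveI : IsProbabilityMeasure Γ := by
    constructor
    have h1 : Γ.map Prod.fst Set.univ = 1 := by rw [hΓ.1]; exact measure_univ
    rwa [Measure.map_apply measurable_fst MeasurableSet.univ, Set.preimage_univ] at h1
  set η : Kernel ((PairIdx n → ℝ) × (PairIdx n → ℝ)) ((Fin n → X) × (Fin n → Y)) :=
    (κ.comap Prod.fst measurable_fst) ×ₖ (κ'.comap Prod.snd measurable_snd) with hη_def
  haveI : IsMarkovKernel η := by rw [hη_def]; infer_instance
  refine ⟨(Γ ⊗ₘ η).map Prod.snd, ?_, ?_, ?_⟩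
  · rw [Measure.map_map measurable_fst measurable_snd]
    ext s hs
    rw [Measure.map_apply (measurable_fst.comp measurable_snd) hs,
      Measure.compProd_apply ((measurable_fst.comp measurable_snd) hs)]
    have hpre : ∀ ab : (PairIdx n → ℝ) × (PairIdx n → ℝ),
        η ab (Prod.mk ab ⁻¹' ((Prod.fst ∘ Prod.snd) ⁻¹' s)) = κ ab.1 s := by
      intro ab
      have : (Prod.mk ab ⁻¹' ((Prod.fst ∘ Prod.snd) ⁻¹' s))
          = s ×ˢ (Set.univ : Set (Fin n → Y)) := by
        ext w; simp
      rw [this, hη_def, Kernel.prod_apply, Kernel.comap_apply, Kernel.comap_apply,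
        Measure.prod_prod, measure_univ, mul_one]
    simp_rw [hpre]
    rw [← lintegral_map (κ.measurable_coe hs) measurable_fst, hΓ.1]
    exact hκint s hs
  · rw [Measure.map_map measurable_snd measurable_snd]
    ext s hs
    rw [Measure.map_apply (measurable_snd.comp measurable_snd) hs,
      Measure.compProd_apply ((measurable_snd.comp measurable_snd) hs)]
    have hpre : ∀ ab : (PairIdx n → ℝ) × (PairIdx n → ℝ),
        η ab (Prod.mk ab ⁻¹' ((Prod.snd ∘ Prod.snd) ⁻¹' s)) = κ' ab.2 s := by
      intro ab
      have : (Prod.mk ab ⁻¹' ((Prod.snd ∘ Prod.snd) ⁻¹' s))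
          = (Set.univ : Set (Fin n → X)) ×ˢ s := by
        ext w; simp
      rw [this, hη_def, Kernel.prod_apply, Kernel.comap_apply, Kernel.comap_apply,
        Measure.prod_prod, measure_univ, one_mul]
    simp_rw [hpre]
    rw [← lintegral_map (κ'.measurable_coe hs) measurable_snd, hΓ.2]
    exact hκ'int s hs
  · have hF : Measurable (fun w : (Fin n → X) × (Fin n → Y) =>
        (dmMap n dist w.1, dmMap n dist w.2)) :=
      (hTX.comp measurable_fst).prodMk (hTY.comp measurable_snd)
    rw [Measure.map_map hF measurable_snd]
    ext s hs
    rw [Measure.map_apply (hF.comp measurable_snd) hs,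
      Measure.compProd_apply ((hF.comp measurable_snd) hs)]
    -- transfer a.e. concentration to Γ
    have hmf : Measurable fun b : PairIdx n → ℝ =>
        κ b (Prod.mk b ⁻¹' {p : (PairIdx n → ℝ) × (Fin n → X) | dmMap n dist p.2 = p.1}) :=
      Kernel.measurable_kernel_prodMk_left hSX
    have hmf' : Measurable fun b : PairIdx n → ℝ =>
        κ' b (Prod.mk b ⁻¹' {p : (PairIdx n → ℝ) × (Fin n → Y) | dmMap n dist p.2 = p.1}) :=
      Kernel.measurable_kernel_prodMk_left hSY
    have hae1 : ∀ᵐ ab ∂Γ, κ ab.1 {a | dmMap n dist a = ab.1} = 1 := by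
      have h := hκae
      rw [show (Measure.pi fun _ : Fin n => μ).map (dmMap n dist) = dmLaw n dist μ from rfl,
        ← hΓ.1] at h
      exact (ae_map_iff measurable_fst.aemeasurable
        (hmf (measurableSet_singleton 1))).mp h
    have hae2 : ∀ᵐ ab ∂Γ, κ' ab.2 {a | dmMap n dist a = ab.2} = 1 := by
      have h := hκ'ae
      rw [show (Measure.pi fun _ : Fin n => ν).map (dmMap n dist) = dmLaw n dist ν from rfl,
        ← hΓ.2] at h
      exact (ae_map_iff measurable_snd.aemeasurable
        (hmf' (measurableSet_singleton 1))).mp h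
    rw [← lintegral_indicator_one hs]
    refine lintegral_congr_ae ?_
    filter_upwards [hae1, hae2] with ab h1 h2
    have hset : (Prod.mk ab ⁻¹' (((fun w : (Fin n → X) × (Fin n → Y) =>
          (dmMap n dist w.1, dmMap n dist w.2)) ∘ Prod.snd) ⁻¹' s))
        = {w : (Fin n → X) × (Fin n → Y) | (dmMap n dist w.1, dmMap n dist w.2) ∈ s} := rfl
    rw [hset, hη_def, Kernel.prod_apply, Kernel.comap_apply, Kernel.comap_apply]
    haveI : IsProbabilityMeasure (κ ab.1) := hκM.isProbabilityMeasure _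
    haveI : IsProbabilityMeasure (κ' ab.2) := hκ'M.isProbabilityMeasure _
    set E : Set ((Fin n → X) × (Fin n → Y)) :=
      {a | dmMap n dist a = ab.1} ×ˢ {b | dmMap n dist b = ab.2} with hE_def
    have hEmeas : MeasurableSet E :=
      (hTX (measurableSet_singleton ab.1)).prod (hTY (measurableSet_singleton ab.2))
    have hE : ((κ ab.1).prod (κ' ab.2)) E = 1 := by
      rw [hE_def, Measure.prod_prod, h1, h2, one_mul]
    by_cases hmem : ab ∈ s
    · rw [Set.indicator_of_mem hmem, Pi.one_apply]
      refine le_antisymm prob_le_one ?_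
      calc (1 : ℝ≥0∞) = ((κ ab.1).prod (κ' ab.2)) E := hE.symm
        _ ≤ _ := by
          refine measure_mono fun w hw => ?_
          obtain ⟨hw1, hw2⟩ := hw
          show (dmMap n dist w.1, dmMap n dist w.2) ∈ s
          rw [show dmMap n dist w.1 = ab.1 from hw1, show dmMap n dist w.2 = ab.2 from hw2]
          exact hmem
    · rw [Set.indicator_of_notMem hmem]
      have hEc : ((κ ab.1).prod (κ' ab.2)) Eᶜ = 0 := by
        rw [measure_compl hEmeas (measure_ne_top _ _), hE, measure_univ, tsub_self]
      refine measure_mono_null (fun w hw => ?_) hEc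
      intro hwE
      obtain ⟨hw1, hw2⟩ := hwE
      apply hmem
      have : (dmMap n dist w.1, dmMap n dist w.2) ∈ s := hw
      rwa [show dmMap n dist w.1 = ab.1 from hw1, show dmMap n dist w.2 = ab.2 from hw2] at this
end
end

section
/- Let 𝒳 = (X, d_X, μ) and 𝒴 = (Y, d_Y, ν) be compact metric measure spaces, n ≥ 2, p ≥ 1. Let Γ* be an optimal coupling of ρ_X^{(n)} and ρ_Y^{(n)} attaining W_p(ρ_X^{(n)}, ρ_Y^{(n)}) for the metric ‖·‖_{p,avg}, and let Λ* be any probability measure on X^n × Y^n with marginals μ^{⊗n} and ν^{⊗n} satisfying (T_X^{(n)}, T_Y^{(n)})_# Λ* = Γ*. For ((x_1,…,x_n),(y_1,…,y_n)) distributed according to Λ*, define μ̂_n = (1/n) Σ_{i=1}^n δ_{x_i}, ν̂_n = (1/n) Σ_{i=1}^n δ_{y_i}, 𝒳̂_n = (X, d_X, μ̂_n), 𝒴̂_n = (Y, d_Y, ν̂_n). Then 𝔼_{Λ*} GW_p(𝒳̂_n, 𝒴̂_n) ≤ ((n−1)/n)^{1/p} · DMW_{n,p}(𝒳, 𝒴).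 -/
open MeasureTheory Filter
open scoped ENNReal NNReal

noncomputable section

section AuxiliaryLemmas

open scoped BigOperators

/-- Any real function is integrable w.r.t. a Dirac measure. -/
lemma integrable_dirac'' {Z : Type*} [MeasurableSpace Z] [MeasurableSingletonClass Z]
    (f : Z → ℝ) (a : Z) : Integrable f (Measure.dirac a) := by
  refine ⟨(aestronglyMeasurable_const (b := f a)).congr ?_, ?_⟩
  · rw [MeasureTheory.ae_dirac_eq]
    exact Filter.eventually_pure.2 rfl
  · simp [MeasureTheory.HasFiniteIntegral, MeasureTheory.lintegral_dirac]

/-- Integral against a normalized sum of Dirac masses. -/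
lemma integral_discrete {Z : Type*} [MeasurableSpace Z] [MeasurableSingletonClass Z]
    (n : ℕ) (z : Fin n → Z) (f : Z → ℝ) :
    ∫ a, f a ∂((n : ℝ≥0∞)⁻¹ • ∑ i : Fin n, Measure.dirac (z i))
      = (n : ℝ)⁻¹ * ∑ i : Fin n, f (z i) := by
  rw [integral_smul_measure,
    integral_finset_sum_measure (fun i _ => integrable_dirac'' f (z i))]
  simp [MeasureTheory.integral_dirac, ENNReal.toReal_inv, smul_eq_mul]

lemma map_pair_fst {X Y : Type*} [MeasurableSpace X] [MeasurableSpace Y]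
    (n : ℕ) (x : Fin n → X) (y : Fin n → Y) :
    ((n : ℝ≥0∞)⁻¹ • ∑ i : Fin n, Measure.dirac (x i, y i)).map Prod.fst = empMeas n x := by
  refine Measure.ext fun s hs => ?_
  rw [Measure.map_apply measurable_fst hs]
  simp only [empMeas, Measure.smul_apply, Measure.finset_sum_apply,
    Measure.dirac_apply' _ (measurable_fst hs), Measure.dirac_apply' _ hs, smul_eq_mul]
  refine congrArg _ (Finset.sum_congr rfl fun i _ => ?_)
  by_cases h : x i ∈ s
  · rw [Set.indicator_of_mem h, Set.indicator_of_mem (by simpa using h)]; rfl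
  · rw [Set.indicator_of_notMem h, Set.indicator_of_notMem (by simpa using h)]

lemma map_pair_snd {X Y : Type*} [MeasurableSpace X] [MeasurableSpace Y]
    (n : ℕ) (x : Fin n → X) (y : Fin n → Y) :
    ((n : ℝ≥0∞)⁻¹ • ∑ i : Fin n, Measure.dirac (x i, y i)).map Prod.snd = empMeas n y := by
  refine Measure.ext fun s hs => ?_
  rw [Measure.map_apply measurable_snd hs]
  simp only [empMeas, Measure.smul_apply, Measure.finset_sum_apply,
    Measure.dirac_apply' _ (measurable_snd hs), Measure.dirac_apply' _ hs, smul_eq_mul]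
  refine congrArg _ (Finset.sum_congr rfl fun i _ => ?_)
  by_cases h : y i ∈ s
  · rw [Set.indicator_of_mem h, Set.indicator_of_mem (by simpa using h)]; rfl
  · rw [Set.indicator_of_notMem h, Set.indicator_of_notMem (by simpa using h)]

/-- A symmetric function vanishing on the diagonal: the full double sum is twice
the sum over pairs `i < j`. -/
lemma double_sum_pair (n : ℕ) (G : Fin n → Fin n → ℝ)
    (hsymm : ∀ i j, G i j = G j i) (hdiag : ∀ i, G i i = 0) :
    ∑ i : Fin n, ∑ j : Fin n, G i j = 2 * ∑ ij : PairIdx n, G ij.1.1 ij.1.2 := by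
  classical
  have h1 : ∑ i : Fin n, ∑ j : Fin n, G i j
      = ∑ q : Fin n × Fin n, G q.1 q.2 :=
      (Fintype.sum_prod_type (fun q : Fin n × Fin n => G q.1 q.2)).symm
  have hsub : ∑ q ∈ Finset.univ.filter (fun q : Fin n × Fin n => q.1 < q.2), G q.1 q.2
      = ∑ ij : PairIdx n, G ij.1.1 ij.1.2 :=
    Finset.sum_subtype (p := fun q : Fin n × Fin n => q.1 < q.2) _ (by simp) _
  have hswap : ∑ q ∈ Finset.univ.filter (fun q : Fin n × Fin n => q.2 < q.1), G q.1 q.2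
      = ∑ q ∈ Finset.univ.filter (fun q : Fin n × Fin n => q.1 < q.2), G q.1 q.2 := by
    refine Finset.sum_nbij' (fun q => Prod.swap q) (fun q => Prod.swap q) ?_ ?_ ?_ ?_ ?_
    · intro a ha; simp only [Finset.mem_filter, Finset.mem_univ, true_and] at ha ⊢; exact ha
    · intro a ha; simp only [Finset.mem_filter, Finset.mem_univ, true_and] at ha ⊢; exact ha
    · intro a _; simp
    · intro a _; simp
    · intro a _; exact hsymm a.1 a.2
  have hsplit1 := Finset.sum_filter_add_sum_filter_not (Finset.univ : Finset (Fin n × Fin n))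
      (fun q => q.1 < q.2) (fun q => G q.1 q.2)
  have hsplit2 := Finset.sum_filter_add_sum_filter_not
      (Finset.univ.filter (fun q : Fin n × Fin n => ¬ q.1 < q.2))
      (fun q => q.2 < q.1) (fun q => G q.1 q.2)
  have he1 : (Finset.univ.filter (fun q : Fin n × Fin n => ¬ q.1 < q.2)).filter
      (fun q => q.2 < q.1) = Finset.univ.filter (fun q : Fin n × Fin n => q.2 < q.1) := by
    ext q
    simp only [Finset.mem_filter, Finset.mem_univ, true_and]
    constructor
    · rintro ⟨-, h⟩; exact h
    · intro h; exact ⟨asymm h, h⟩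
  have he2 : ∑ q ∈ (Finset.univ.filter (fun q : Fin n × Fin n => ¬ q.1 < q.2)).filter
      (fun q => ¬ q.2 < q.1), G q.1 q.2 = 0 := by
    refine Finset.sum_eq_zero fun q hq => ?_
    simp only [Finset.mem_filter, Finset.mem_univ, true_and] at hq
    have : q.1 = q.2 := le_antisymm (le_of_not_gt hq.2) (le_of_not_gt hq.1)
    have hq1 : G q.1 q.2 = G q.1 q.1 := by rw [this]
    rw [hq1, hdiag]
  rw [h1, ← hsplit1, ← hsplit2, he1, he2, hswap, ← hsub]
  ring

/-- Jensen's inequality `∫ f ≤ (∫ f^p)^{1/p}` for a probability measure. -/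
lemma jensen_int_le {α : Type*} [MeasurableSpace α] (μ : Measure α) [IsProbabilityMeasure μ]
    {p : ℝ} (hp : 1 ≤ p) {f : α → ℝ} (hmeas : Measurable f) (hnn : ∀ a, 0 ≤ f a)
    (hint : Integrable (fun a => f a ^ p) μ) :
    ∫ a, f a ∂μ ≤ (∫ a, f a ^ p ∂μ) ^ (1 / p) := by
  rcases eq_or_lt_of_le hp with h1 | h1
  · rw [← h1]
    simp
  · have hp0 : (0:ℝ) < p := lt_trans one_pos h1
    set F : α → ℝ≥0∞ := fun a => ENNReal.ofReal (f a) with hF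
    have hFmeas : AEMeasurable F μ := (hmeas.ennreal_ofReal).aemeasurable
    have hpq : p.HolderConjugate p.conjExponent := Real.HolderConjugate.conjExponent h1
    have key := ENNReal.lintegral_mul_le_Lp_mul_Lq μ hpq hFmeas
      (aemeasurable_const (b := (1 : ℝ≥0∞)))
    simp only [Pi.mul_apply, Pi.one_apply, mul_one, ENNReal.one_rpow,
      MeasureTheory.lintegral_one, measure_univ, ENNReal.one_rpow] at key
    have hfp_eq : ∀ a, ENNReal.ofReal (f a ^ p) = F a ^ p := fun a =>
      (ENNReal.ofReal_rpow_of_nonneg (hnn a) hp0.le).symm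
    have hI1 : ∫ a, f a ∂μ = (∫⁻ a, F a ∂μ).toReal :=
      integral_eq_lintegral_of_nonneg_ae (Filter.Eventually.of_forall hnn)
        hmeas.aestronglyMeasurable
    have hI2 : ∫ a, f a ^ p ∂μ = (∫⁻ a, F a ^ p ∂μ).toReal := by
      rw [integral_eq_lintegral_of_nonneg_ae
        (Filter.Eventually.of_forall fun a => Real.rpow_nonneg (hnn a) p)
        ((hmeas.pow_const p).aestronglyMeasurable)]
      congr 1
      exact lintegral_congr fun a => hfp_eq a
    have htop : (∫⁻ a, F a ^ p ∂μ) ≠ ⊤ := by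
      have := hint.lintegral_lt_top
      rw [lintegral_congr (fun a => hfp_eq a)] at this
      exact this.ne
    rw [hI1, hI2, ENNReal.toReal_rpow]
    exact ENNReal.toReal_mono (ENNReal.rpow_ne_top_of_nonneg (by positivity) htop) key

lemma avgDist_nonneg (n : ℕ) (p : ℝ) (a b : PairIdx n → ℝ) : 0 ≤ avgDist n p a b :=
  Real.rpow_nonneg
    (mul_nonneg (by positivity)
      (Finset.sum_nonneg fun ij _ => Real.rpow_nonneg (abs_nonneg _) _)) _

lemma gw_nonneg {X Y : Type*} [MeasurableSpace X] [MeasurableSpace Y]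
    (p : ℝ) (dX : X → X → ℝ) (dY : Y → Y → ℝ) (μ : Measure X) (ν : Measure Y) :
    0 ≤ GW p dX dY μ ν := by
  apply Real.rpow_nonneg
  apply Real.sInf_nonneg
  rintro c ⟨π, -, rfl⟩
  exact integral_nonneg fun w => Real.rpow_nonneg (abs_nonneg _) p

/-- The key pointwise bound: the Gromov–Wasserstein distance of the empirical measures
is controlled by the averaged distance-matrix discrepancy, via the diagonal coupling. -/
lemma gw_pointwise {X Y : Type*}
    [MetricSpace X] [CompactSpace X] [MeasurableSpace X] [BorelSpace X]
    [MetricSpace Y] [CompactSpace Y] [MeasurableSpace Y] [BorelSpace Y]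
    (n : ℕ) (hn : 2 ≤ n) {p : ℝ} (hp : 1 ≤ p) (x : Fin n → X) (y : Fin n → Y) :
    GW p dist dist (empMeas n x) (empMeas n y) ≤
      (((n : ℝ) - 1) / n) ^ (1 / p) * avgDist n p (dmMap n dist x) (dmMap n dist y) := by
  classical
  have hp0 : (0:ℝ) < p := lt_of_lt_of_le one_pos hp
  have hn0 : n ≠ 0 := by omega
  have hnR : (0:ℝ) < (n:ℝ) := by exact_mod_cast Nat.pos_of_ne_zero hn0
  have hn1 : (1:ℝ) ≤ (n:ℝ) - 1 := by
    have : (2:ℝ) ≤ (n:ℝ) := by exact_mod_cast hn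
    linarith
  set G : Fin n → Fin n → ℝ := fun i j => |dist (x i) (x j) - dist (y i) (y j)| ^ p with hG
  set π : Measure (X × Y) := (n : ℝ≥0∞)⁻¹ • ∑ i : Fin n, Measure.dirac (x i, y i) with hπ
  have hmem : π ∈ couplings (empMeas n x) (empMeas n y) :=
    ⟨map_pair_fst n x y, map_pair_snd n x y⟩
  haveI : IsProbabilityMeasure π := by
    constructor
    rw [hπ, Measure.smul_apply, Measure.finset_sum_apply]
    simp only [measure_univ, Finset.sum_const, Finset.card_univ, Fintype.card_fin,
      nsmul_eq_mul, mul_one, smul_eq_mul]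
    exact ENNReal.inv_mul_cancel (by exact_mod_cast hn0) (ENNReal.natCast_ne_top n)
  set f : (X × Y) × (X × Y) → ℝ := fun w => |dist w.1.1 w.2.1 - dist w.1.2 w.2.2| ^ p with hf
  have hfc : Continuous f := by
    apply Continuous.rpow_const
    · exact (((continuous_fst.fst).dist (continuous_snd.fst)).sub
        ((continuous_fst.snd).dist (continuous_snd.snd))).abs
    · intro w; exact Or.inr hp0.le
  have hint : Integrable f (π.prod π) :=
    hfc.integrable_of_hasCompactSupport (HasCompactSupport.of_compactSpace f)
  have hcost : ∫ w, f w ∂(π.prod π)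
      = (n:ℝ)⁻¹ * ∑ i : Fin n, ((n:ℝ)⁻¹ * ∑ j : Fin n, G i j) := by
    rw [MeasureTheory.integral_prod f hint, hπ,
      integral_discrete n (fun i => (x i, y i)) (fun a => ∫ b, f (a, b) ∂((n : ℝ≥0∞)⁻¹ • ∑ i : Fin n, Measure.dirac (x i, y i)))]
    congr 1
    refine Finset.sum_congr rfl fun i _ => ?_
    exact integral_discrete n (fun j => (x j, y j)) (fun b => f ((x i, y i), b))
  have hGsymm : ∀ i j, G i j = G j i := by
    intro i j; simp only [hG, dist_comm]
  have hGdiag : ∀ i, G i i = 0 := by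
    intro i; simp [hG, Real.zero_rpow hp0.ne']
  have hdouble := double_sum_pair n G hGsymm hGdiag
  set S : ℝ := ∑ ij : PairIdx n, G ij.1.1 ij.1.2 with hSdef
  have hS0 : 0 ≤ S :=
    Finset.sum_nonneg fun ij _ => Real.rpow_nonneg (abs_nonneg _) p
  have hdvd : 2 ∣ n * (n - 1) := by
    rcases Nat.even_or_odd n with h | h
    · exact Dvd.dvd.mul_right h.two_dvd _
    · exact Dvd.dvd.mul_left (Nat.Odd.sub_odd h odd_one).two_dvd _
  have hnat : 2 * n.choose 2 = n * (n - 1) := by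
    rw [Nat.choose_two_right, Nat.mul_comm, Nat.div_mul_cancel hdvd]
  have hchoose : 2 * (n.choose 2 : ℝ) = (n:ℝ) * ((n:ℝ) - 1) := by
    have := congrArg (fun m : ℕ => (m : ℝ)) hnat
    push_cast [Nat.cast_sub (show 1 ≤ n by omega)] at this
    linarith
  have hNne : ((n.choose 2 : ℕ) : ℝ) ≠ 0 := by
    have : 0 < n.choose 2 := Nat.choose_pos hn
    positivity
  have hn1ne : ((n:ℝ) - 1) ≠ 0 := by linarith
  have hNval : ((n.choose 2 : ℕ) : ℝ)⁻¹ = 2 / ((n:ℝ) * ((n:ℝ) - 1)) := by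
    rw [eq_div_iff (mul_ne_zero hnR.ne' hn1ne), ← hchoose]
    field_simp
  have hcost2 : ∫ w, f w ∂(π.prod π)
      = (((n:ℝ) - 1) / n) * (((n.choose 2 : ℕ) : ℝ)⁻¹ * S) := by
    rw [hcost, ← Finset.mul_sum, hdouble, hNval]
    field_simp
  -- conclude
  have hA0 : 0 ≤ ((n.choose 2 : ℕ) : ℝ)⁻¹ * S := by positivity
  have havg : avgDist n p (dmMap n dist x) (dmMap n dist y)
      = (((n.choose 2 : ℕ) : ℝ)⁻¹ * S) ^ (1 / p) := rfl
  unfold GW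
  set T : Set ℝ := {c : ℝ | ∃ π ∈ couplings (empMeas n x) (empMeas n y),
      c = ∫ w, |dist w.1.1 w.2.1 - dist w.1.2 w.2.2| ^ p ∂(π.prod π)} with hT
  have hbdd : BddBelow T := by
    refine ⟨0, ?_⟩
    rintro c ⟨π', -, rfl⟩
    exact integral_nonneg fun w => Real.rpow_nonneg (abs_nonneg _) p
  have hmemT : (∫ w, f w ∂(π.prod π)) ∈ T := ⟨π, hmem, rfl⟩
  have hinf_le : sInf T ≤ ∫ w, f w ∂(π.prod π) := csInf_le hbdd hmemT
  have hinf0 : 0 ≤ sInf T := by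
    apply Real.sInf_nonneg
    rintro c ⟨π', -, rfl⟩
    exact integral_nonneg fun w => Real.rpow_nonneg (abs_nonneg _) p
  calc sInf T ^ (1 / p) ≤ (∫ w, f w ∂(π.prod π)) ^ (1 / p) :=
        Real.rpow_le_rpow hinf0 hinf_le (by positivity)
    _ = ((((n:ℝ) - 1) / n) * (((n.choose 2 : ℕ) : ℝ)⁻¹ * S)) ^ (1 / p) := by rw [hcost2]
    _ = (((n : ℝ) - 1) / n) ^ (1 / p) * avgDist n p (dmMap n dist x) (dmMap n dist y) := by
        rw [Real.mul_rpow (by positivity) hA0, havg]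

end AuxiliaryLemmas

set_option maxHeartbeats 1000000 in
/-- **Empirical GW controlled by DMW.**
If `Γ*` is an optimal coupling attaining `W_p(ρ_X^{(n)}, ρ_Y^{(n)})` and `Λ*` is
a lift of `Γ*` to `X^n × Y^n` with marginals `μ^{⊗n}` and `ν^{⊗n}`, then
`𝔼_{Λ*} GW_p(𝒳̂_n, 𝒴̂_n) ≤ ((n−1)/n)^{1/p} · DMW_{n,p}(𝒳,𝒴)`, where
`𝒳̂_n = (X, d_X, μ̂_n)` and `𝒴̂_n = (Y, d_Y, ν̂_n)` are built from the sampled tuples. -/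
theorem empirical_gw_control {X Y : Type*}
    [MetricSpace X] [CompactSpace X] [MeasurableSpace X] [BorelSpace X]
    [MetricSpace Y] [CompactSpace Y] [MeasurableSpace Y] [BorelSpace Y]
    (μ : Measure X) (ν : Measure Y) [IsProbabilityMeasure μ] [IsProbabilityMeasure ν]
    (n : ℕ) (hn : 2 ≤ n) (p : ℝ) (hp : 1 ≤ p)
    (Γ : Measure ((PairIdx n → ℝ) × (PairIdx n → ℝ)))
    (hΓ : Γ ∈ couplings (dmLaw n dist μ) (dmLaw n dist ν))
    (hopt : (∫ z, avgDist n p z.1 z.2 ^ p ∂Γ) ^ (1 / p) = DMW n p dist dist μ ν)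
    (Λ : Measure ((Fin n → X) × (Fin n → Y)))
    (hfst : Λ.map Prod.fst = Measure.pi (fun _ : Fin n => μ))
    (hsnd : Λ.map Prod.snd = Measure.pi (fun _ : Fin n => ν))
    (hpush : Λ.map (fun w => (dmMap n dist w.1, dmMap n dist w.2)) = Γ) :
    ∫ w, GW p dist dist (empMeas n w.1) (empMeas n w.2) ∂Λ ≤
      (((n : ℝ) - 1) / n) ^ (1 / p) * DMW n p dist dist μ ν := by
  
  classical
  have hp0 : (0:ℝ) < p := lt_of_lt_of_le one_pos hp
  haveI : IsProbabilityMeasure Λ := by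
    constructor
    have h := congrArg (fun m : Measure (Fin n → X) => m Set.univ) hfst
    simp only [Measure.map_apply measurable_fst MeasurableSet.univ, Set.preimage_univ] at h
    rw [h, measure_univ]
  set T : ((Fin n → X) × (Fin n → Y)) → (PairIdx n → ℝ) × (PairIdx n → ℝ) :=
    fun w => (dmMap n dist w.1, dmMap n dist w.2) with hTdef
  have hTc : Continuous T := by
    apply Continuous.prodMk
    · exact continuous_pi fun ij =>
        (((continuous_apply ij.1.1).comp continuous_fst).dist
          ((continuous_apply ij.1.2).comp continuous_fst))
    · exact continuous_pi fun ij =>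
        (((continuous_apply ij.1.1).comp continuous_snd).dist
          ((continuous_apply ij.1.2).comp continuous_snd))
  set F : ((Fin n → X) × (Fin n → Y)) → ℝ :=
    fun w => avgDist n p (dmMap n dist w.1) (dmMap n dist w.2) with hFdef
  have havgc : Continuous (fun z : (PairIdx n → ℝ) × (PairIdx n → ℝ) =>
      avgDist n p z.1 z.2) := by
    apply Continuous.rpow_const
    · refine continuous_const.mul (continuous_finset_sum _ fun ij _ => ?_)
      refine Continuous.rpow_const ?_ fun _ => Or.inr hp0.le
      exact (((continuous_apply ij).comp continuous_fst).sub
        ((continuous_apply ij).comp continuous_snd)).abs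
    · intro z; exact Or.inr (by positivity)
  have hFc : Continuous F := by
    have h1 : Continuous (fun w : (Fin n → X) × (Fin n → Y) =>
        ((fun z : (PairIdx n → ℝ) × (PairIdx n → ℝ) => avgDist n p z.1 z.2) ∘ T) w) :=
      havgc.comp hTc
    exact h1
  have hFnn : ∀ w, 0 ≤ F w := fun w => avgDist_nonneg n p _ _
  have hFint : Integrable F Λ :=
    hFc.integrable_of_hasCompactSupport (HasCompactSupport.of_compactSpace F)
  have hFpc : Continuous (fun w => F w ^ p) := hFc.rpow_const fun _ => Or.inr hp0.le
  have hFpint : Integrable (fun w => F w ^ p) Λ :=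
    hFpc.integrable_of_hasCompactSupport (HasCompactSupport.of_compactSpace _)
  have hpt : ∀ w : (Fin n → X) × (Fin n → Y),
      GW p dist dist (empMeas n w.1) (empMeas n w.2) ≤ (((n:ℝ)-1)/n) ^ (1/p) * F w :=
    fun w => gw_pointwise n hn hp w.1 w.2
  have h2n : (2:ℝ) ≤ (n:ℝ) := by exact_mod_cast hn
  have hcoef0 : (0:ℝ) ≤ (((n:ℝ)-1)/n) ^ (1/p) := by
    apply Real.rpow_nonneg
    apply div_nonneg <;> linarith
  have hmapint : ∫ w, F w ^ p ∂Λ = ∫ z, avgDist n p z.1 z.2 ^ p ∂Γ := by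
    rw [← hpush, integral_map hTc.measurable.aemeasurable
      ((havgc.rpow_const fun _ => Or.inr hp0.le).aestronglyMeasurable)]
  calc ∫ w, GW p dist dist (empMeas n w.1) (empMeas n w.2) ∂Λ
      ≤ ∫ w, (((n:ℝ)-1)/n) ^ (1/p) * F w ∂Λ :=
        integral_mono_of_nonneg
          (Filter.Eventually.of_forall fun w => gw_nonneg p dist dist _ _)
          (hFint.const_mul _) (Filter.Eventually.of_forall hpt)
    _ = (((n:ℝ)-1)/n) ^ (1/p) * ∫ w, F w ∂Λ := integral_const_mul _ _
    _ ≤ (((n:ℝ)-1)/n) ^ (1/p) * (∫ w, F w ^ p ∂Λ) ^ (1/p) :=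
        mul_le_mul_of_nonneg_left
          (jensen_int_le Λ hp hFc.measurable hFnn hFpint) hcoef0
    _ = (((n:ℝ)-1)/n) ^ (1/p) * DMW n p dist dist μ ν := by
        rw [hmapint, hopt]
end
end

section
/- There exist two metric measure spaces 𝒳 = (X, d_X, μ) and 𝒴 = (Y, d_Y, ν), each consisting of four points equipped with the uniform probability measure, such that the order-2 distance-matrix laws coincide, ρ_X^{(2)} = ρ_Y^{(2)}, yet 𝒳 and 𝒴 are not measure-preserving isometric. (Explicitly: in X the two pairs at distance 2 form a perfect matching and all other distinct pairs have distance 1; in Y the two pairs at distance 2 share a common endpoint and all other distinct pairs have distance 1.) -/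
open MeasureTheory Filter
open scoped ENNReal NNReal

noncomputable section

/-- `d` is a metric on `X`. -/
def IsMetricOn {X : Type*} (d : X → X → ℝ) : Prop :=
  (∀ x y, d x y = 0 ↔ x = y) ∧ (∀ x y, d x y = d y x) ∧
    ∀ x y z, d x z ≤ d x y + d y z

/-- Four-point space where the two pairs at distance `2` form a perfect matching
(the opposite pairs of a four-cycle); all other distinct pairs are at distance `1`. -/
def dC4 : Fin 4 → Fin 4 → ℝ := fun i j =>
  if i = j then 0
  else if (i = 0 ∧ j = 2) ∨ (i = 2 ∧ j = 0) ∨ (i = 1 ∧ j = 3) ∨ (i = 3 ∧ j = 1)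
    then 2 else 1

/-- Four-point space where the two pairs at distance `2` share a common endpoint;
all other distinct pairs are at distance `1`. -/
def dStar : Fin 4 → Fin 4 → ℝ := fun i j =>
  if i = j then 0
  else if (i = 0 ∧ j = 1) ∨ (i = 1 ∧ j = 0) ∨ (i = 0 ∧ j = 2) ∨ (i = 2 ∧ j = 0)
    then 2 else 1

/-- The uniform probability measure on four points. -/
def unif4 : Measure (Fin 4) := (4 : ℝ≥0∞)⁻¹ • ∑ i : Fin 4, Measure.dirac i

/-! Both spaces put distance `0` on the diagonal, `2` on two unordered pairs and `1` on the other
four, so the permutation of ordered pairs that exchanges the pair `{1, 3}` with `{0, 1}` carries one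
distance function to the other; it preserves the uniform product measure, hence the two laws of
`d(x₁, x₂)` agree. In the star the point `0` is at distance `2` from two points, whereas in the
matching every point is at distance `2` from only one, so no isometry maps the matching onto the
star. -/

open Function

section TwoOneDist

variable {α : Type*} [DecidableEq α] (r : α → α → Prop) [DecidableRel r]

def twoOneDist (x y : α) : ℝ :=
  if x = y then 0 else if r x y then 2 else 1

variable {r}

theorem twoOneDist_eq_zero_iff {x y : α} : twoOneDist r x y = 0 ↔ x = y := by
  unfold twoOneDist; split_ifs <;> simp_all

theorem twoOneDist_eq_two_iff {x y : α} : twoOneDist r x y = 2 ↔ x ≠ y ∧ r x y := by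
  unfold twoOneDist; split_ifs <;> simp_all

theorem twoOneDist_comm (hr : ∀ x y, r x y → r y x) (x y : α) :
    twoOneDist r x y = twoOneDist r y x := by
  unfold twoOneDist
  simp only [eq_comm (a := x), (⟨hr x y, hr y x⟩ : r x y ↔ r y x)]

theorem twoOneDist_le_two (x y : α) : twoOneDist r x y ≤ 2 := by
  unfold twoOneDist; split_ifs <;> norm_num

theorem one_le_twoOneDist {x y : α} (h : x ≠ y) : 1 ≤ twoOneDist r x y := by
  unfold twoOneDist; split_ifs <;> first | contradiction | norm_num

theorem isMetricOn_twoOneDist (hr : ∀ x y, r x y → r y x) : IsMetricOn (twoOneDist r) := by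
  refine ⟨fun x y => twoOneDist_eq_zero_iff, twoOneDist_comm hr, fun x y z => ?_⟩
  obtain rfl | hxy := eq_or_ne x y
  · simp [twoOneDist]
  obtain rfl | hyz := eq_or_ne y z
  · simp [twoOneDist]
  linarith [twoOneDist_le_two (r := r) x z, one_le_twoOneDist (r := r) hxy,
    one_le_twoOneDist (r := r) hyz]

theorem twoOneDist_congr {β : Type*} [DecidableEq β] {s : β → β → Prop} [DecidableRel s]
    {x y : α} {x' y' : β} (h : x' = y' ↔ x = y) (hs : s x' y' ↔ r x y) :
    twoOneDist s x' y' = twoOneDist r x y := by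
  simp only [twoOneDist, h, hs]

end TwoOneDist

theorem not_surjective_of_dist_eq {A B : Type*} {dA : A → A → ℝ} {dB : B → B → ℝ}
    {φ : A → B} (hφ : ∀ a b, dB (φ a) (φ b) = dA a b) {t : ℝ}
    (hA : ∀ a b c, dA a b = t → dA a c = t → b = c) {y z w : B}
    (hz : dB y z = t) (hw : dB y w = t) (hzw : z ≠ w) : ¬ Surjective φ := by
  intro hφ_surj
  obtain ⟨a, rfl⟩ := hφ_surj y
  obtain ⟨b, rfl⟩ := hφ_surj z
  obtain ⟨c, rfl⟩ := hφ_surj w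
  rw [hφ] at hz hw
  exact hzw (congrArg φ (hA a b c hz hw))

theorem mem_suppOf_of_pos {X : Type*} [MeasurableSpace X] {d : X → X → ℝ} {μ : Measure X}
    {x : X} (hx : d x x = 0) (hμ : 0 < μ {x}) : x ∈ suppOf d μ :=
  fun ε hε => hμ.trans_le (measure_mono (by simpa [hx]))

theorem measurePreserving_of_measure_singleton_eq {X : Type*} [MeasurableSpace X] [Countable X]
    [MeasurableSingletonClass X] {μ : Measure X} (hμ : ∀ x y, μ {x} = μ {y}) (e : X ≃ X) :
    MeasurePreserving e μ μ := by
  refine ⟨measurable_of_countable e, Measure.ext_iff_singleton.mpr fun x => ?_⟩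
  rw [Measure.map_apply (measurable_of_countable e) (measurableSet_singleton x),
    ← e.image_symm_eq_preimage, Set.image_singleton, hμ]

theorem dmLaw_eq_of_measurePreserving {X Y : Type*} [MeasurableSpace X] [MeasurableSpace Y]
    {n : ℕ} {dX : X → X → ℝ} {dY : Y → Y → ℝ} {μ : Measure X} {ν : Measure Y}
    (hdY : Measurable (dmMap n dY)) {e : (Fin n → X) → (Fin n → Y)}
    (he : MeasurePreserving e (Measure.pi fun _ => μ) (Measure.pi fun _ => ν))
    (hd : dmMap n dY ∘ e = dmMap n dX) :
    dmLaw n dX μ = dmLaw n dY ν := by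
  rw [dmLaw, dmLaw, ← he.map_eq, Measure.map_map hdY he.measurable, hd]

theorem dmMap_two_apply {X : Type*} (d : X → X → ℝ) (x : Fin 2 → X) (ij : PairIdx 2) :
    dmMap 2 d x ij = d (x 0) (x 1) := by
  obtain ⟨⟨i, j⟩, hij⟩ := ij
  obtain ⟨rfl, rfl⟩ : i = 0 ∧ j = 1 := by revert i j; decide
  rfl

theorem dmLaw_two_eq_of_perm {X : Type*} [MeasurableSpace X] [Countable X]
    [MeasurableSingletonClass X] {dX dY : X → X → ℝ} {μ : Measure X} [SigmaFinite μ]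
    (hμ : ∀ x y, μ {x} = μ {y}) (σ : Equiv.Perm (X × X))
    (hσ : ∀ p, dY (σ p).1 (σ p).2 = dX p.1 p.2) :
    dmLaw 2 dX μ = dmLaw 2 dY μ := by
  refine dmLaw_eq_of_measurePreserving (measurable_of_countable _)
    (measurePreserving_of_measure_singleton_eq (fun x y => ?_)
      ((piFinTwoEquiv fun _ => X).symm.permCongr σ)) ?_
  · simp only [Measure.pi_singleton, Fin.prod_univ_two, hμ (x 0) (y 0), hμ (x 1) (y 1)]
  · ext x ij
    simp [dmMap_two_apply, hσ]

theorem unif4_singleton (i : Fin 4) : unif4 {i} = 4⁻¹ := by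
  simp [unif4, Measure.finsetSum_apply, Set.indicator_apply]

instance isProbabilityMeasure_unif4 : IsProbabilityMeasure unif4 where
  measure_univ := by
    simp only [unif4, Measure.smul_apply, Measure.finsetSum_apply, measure_univ, Finset.sum_const,
      Finset.card_univ, Fintype.card_fin, nsmul_eq_mul, Nat.cast_ofNat, mul_one, smul_eq_mul]
    exact ENNReal.inv_mul_cancel (by norm_num) (by norm_num)

abbrev matchingRel (i j : Fin 4) : Prop :=
  (i = 0 ∧ j = 2) ∨ (i = 2 ∧ j = 0) ∨ (i = 1 ∧ j = 3) ∨ (i = 3 ∧ j = 1)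

abbrev starRel (i j : Fin 4) : Prop :=
  (i = 0 ∧ j = 1) ∨ (i = 1 ∧ j = 0) ∨ (i = 0 ∧ j = 2) ∨ (i = 2 ∧ j = 0)

theorem dC4_eq_twoOneDist : dC4 = twoOneDist matchingRel := rfl

theorem dStar_eq_twoOneDist : dStar = twoOneDist starRel := rfl

theorem mem_suppOf_twoOneDist_unif4 (r : Fin 4 → Fin 4 → Prop) [DecidableRel r] (i : Fin 4) :
    i ∈ suppOf (twoOneDist r) unif4 :=
  mem_suppOf_of_pos (twoOneDist_eq_zero_iff.mpr rfl) (by simp [unif4_singleton])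

/-- **A fixed-order counterexample.**
There exist two four-point metric measure spaces with uniform measures whose
order-2 distance-matrix laws coincide, yet which are not measure-preserving
isometric: the explicit matching/star examples. -/
theorem fixed_order_counterexample :
    IsMetricOn dC4 ∧ IsMetricOn dStar ∧
    IsProbabilityMeasure unif4 ∧
    dmLaw 2 dC4 unif4 = dmLaw 2 dStar unif4 ∧
    ¬ MPIsoD dC4 dStar unif4 unif4 := by
  rw [dC4_eq_twoOneDist, dStar_eq_twoOneDist]
  refine ⟨isMetricOn_twoOneDist (by decide), isMetricOn_twoOneDist (by decide), inferInstance,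
    ?_, ?_⟩
  · refine dmLaw_two_eq_of_perm (fun i j => by rw [unif4_singleton, unif4_singleton])
      (Equiv.swap (1, 3) (0, 1) * Equiv.swap (3, 1) (1, 0)) fun p => twoOneDist_congr ?_ ?_ <;>
      revert p <;> decide
  · rintro ⟨φ, hφ_surj, hφ, -⟩
    have hmatching : ∀ a b c, matchingRel a b → matchingRel a c → b = c := by decide
    refine not_surjective_of_dist_eq (dA := fun a b => twoOneDist matchingRel a.1 b.1)
      (dB := fun a b => twoOneDist starRel a.1 b.1) hφ (t := 2) ?_
      (y := ⟨0, mem_suppOf_twoOneDist_unif4 starRel 0⟩)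
      (z := ⟨1, mem_suppOf_twoOneDist_unif4 starRel 1⟩)
      (w := ⟨2, mem_suppOf_twoOneDist_unif4 starRel 2⟩)
      (twoOneDist_eq_two_iff.mpr (by decide)) (twoOneDist_eq_two_iff.mpr (by decide))
      (by decide) hφ_surj
    simp only [twoOneDist_eq_two_iff]
    exact fun a b c hab hac => Subtype.ext (hmatching a b c hab.2 hac.2)
end
end
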